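/- Every sequence $(a_n)$ in a semigroup has a sumsequence $(b_n)$ satisfying one of: (1) $b_n + b_m = b_n$ for all $n < m$; or (2) for all $n$, $FS(b_1, \dots, b_n) \cap (FS(b_1, \dots, b_n) + b_{n+1}) = \emptyset$. -/

import Mathlib

/-- The ordered sum `a_{i_1} + ⋯ + a_{i_m}` over a finite index set
`F = {i_1 < ⋯ < i_m}` (junk value `a 0` if `F = ∅`). -/
def ordsum {S : Type*} [AddSemigroup S] (a : ℕ → S) (F : Finset ℕ) : S :=
  match F.sort (· ≤ ·) with
  | [] => a 0
  | i :: l => l.foldl (fun s j => s + a j) (a i)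

/-- `F < G`: every element of `F` is smaller than every element of `G`. -/
def FinsetLT (F G : Finset ℕ) : Prop := ∀ i ∈ F, ∀ j ∈ G, i < j

/-- `FS(a_1, a_2, …)`: the set of all finite ordered sums of the sequence `a`. -/
def FSset {S : Type*} [AddSemigroup S] (a : ℕ → S) : Set S :=
  {s | ∃ F : Finset ℕ, F.Nonempty ∧ ordsum a F = s}

/-- `FS(a_n, a_{n+1}, …)`: finite ordered sums with all indices `≥ n`. -/
def FStail {S : Type*} [AddSemigroup S] (a : ℕ → S) (n : ℕ) : Set S :=
  {s | ∃ F : Finset ℕ, F.Nonempty ∧ (∀ i ∈ F, n ≤ i) ∧ ordsum a F = s}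

/-- A sequence is proper if `a_{F₁} ≠ a_{F₂}` whenever `F₁ < F₂`. -/
def IsProperSeq {S : Type*} [AddSemigroup S] (a : ℕ → S) : Prop :=
  ∀ F G : Finset ℕ, F.Nonempty → G.Nonempty → FinsetLT F G →
    ordsum a F ≠ ordsum a G

/-- `b` is a sumsequence of `a`: `b_k = a_{F_k}` for finite index sets `F₁ < F₂ < ⋯`. -/
def IsSumseq {S : Type*} [AddSemigroup S] (a b : ℕ → S) : Prop :=
  ∃ F : ℕ → Finset ℕ, (∀ k, (F k).Nonempty) ∧
    (∀ k, FinsetLT (F k) (F (k + 1))) ∧ (∀ k, b k = ordsum a (F k))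


/-- A proper IP set: contains `FS(b)` for an injective sequence `b`. -/
def IsProperIP {S : Type*} [AddSemigroup S] (A : Set S) : Prop :=
  ∃ b : ℕ → S, Function.Injective b ∧ FSset b ⊆ A

/-- Partition regularity of the family of proper IP sets of `S`. -/
def ProperIPPartReg (S : Type*) [AddSemigroup S] : Prop :=
  ∀ A : Set S, IsProperIP A → ∀ (k : ℕ) (c : S → Fin k),
    ∃ i : Fin k, IsProperIP {s ∈ A | c s = i}

/-- `FS(b_0, …, b_{n-1})`: ordered sums over nonempty `F ⊆ {0, …, n-1}`. -/
def FSfin {S : Type*} [AddSemigroup S] (a : ℕ → S) (n : ℕ) : Set S :=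
  {s | ∃ F : Finset ℕ, F.Nonempty ∧ F ⊆ Finset.range n ∧ ordsum a F = s}

/-- `FS_{≥2}(a)`: ordered sums with at least two summands. -/
def FS2set {S : Type*} [AddSemigroup S] (a : ℕ → S) : Set S :=
  {s | ∃ F : Finset ℕ, 2 ≤ F.card ∧ ordsum a F = s}

/-!
If some sumsequence of `a` satisfies (2) we are done, so assume none does. Then inside any
sumsequence `c` of `a`, the greedy construction of a sumsequence with (2) gets stuck after
finitely many terms `b_0, …, b_{n-1}`: every finite sum `y` of a late enough tail of `c` satisfies
`x + y = z` for some `x, z ∈ FS(b_0, …, b_{n-1})`. Colouring these `y` by the pair `(x, z)`,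
Hindman's theorem yields a sumsequence `d` of that tail on which the pair is constant, and then
`z + y = (x + d_0) + y = x + (d_0 + y) = z` for every `y ∈ FS(d_1, d_2, …)`: the finite sum `z`
absorbs everything in a sumsequence placed after it. Repeating this inside `(d_1, d_2, …)` forever
produces `b_0, b_1, …` with `b_n + b_m = b_n` for `n < m`.
-/

open Hindman

section Sumsequences

variable {S : Type*} [AddSemigroup S]

theorem FinsetLT.trans {F G H : Finset ℕ} (hG : G.Nonempty) (hFG : FinsetLT F G)
    (hGH : FinsetLT G H) : FinsetLT F H := fun i hi _ hj ↦
  let ⟨g, hg⟩ := hG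
  (hFG i hi g hg).trans (hGH g hg _ hj)

theorem Finset.sort_union_of_finsetLT {F G : Finset ℕ} (h : FinsetLT F G) :
    (F ∪ G).sort (· ≤ ·) = F.sort (· ≤ ·) ++ G.sort (· ≤ ·) := by
  have hlt : (F.sort (· ≤ ·) ++ G.sort (· ≤ ·)).Pairwise (· < ·) :=
    List.pairwise_append.2 ⟨(F.sortedLT_sort).pairwise, (G.sortedLT_sort).pairwise,
      fun i hi j hj ↦ h i ((F.mem_sort _).1 hi) j ((G.mem_sort _).1 hj)⟩
  rw [← (List.toFinset_sort _ hlt.nodup).2 (hlt.imp le_of_lt), List.toFinset_append,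
    Finset.sort_toFinset, Finset.sort_toFinset]

theorem Finset.Nonempty.exists_sort_eq_cons {F : Finset ℕ} (hF : F.Nonempty) :
    ∃ i l, F.sort (· ≤ ·) = i :: l := by
  rw [← List.ne_nil_iff_exists_cons, ← List.length_pos_iff, Finset.length_sort]
  exact hF.card_pos

theorem ordsum_eq_lift (a : ℕ → S) {F : Finset ℕ} {i : ℕ} {l : List ℕ}
    (h : F.sort (· ≤ ·) = i :: l) : ordsum a F = FreeAddSemigroup.lift a ⟨i, l⟩ := by
  rw [ordsum, h, FreeAddSemigroup.lift_mk_eq_foldl]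

theorem ordsum_singleton (a : ℕ → S) (k : ℕ) : ordsum a {k} = a k :=
  ordsum_eq_lift a (Finset.sort_singleton _ k)

theorem ordsum_union (a : ℕ → S) {F G : Finset ℕ} (hF : F.Nonempty) (hG : G.Nonempty)
    (h : FinsetLT F G) : ordsum a (F ∪ G) = ordsum a F + ordsum a G := by
  obtain ⟨i, l, hFl⟩ := hF.exists_sort_eq_cons
  obtain ⟨j, m, hGm⟩ := hG.exists_sort_eq_cons
  have hFG : (F ∪ G).sort (· ≤ ·) = i :: (l ++ j :: m) := by
    rw [Finset.sort_union_of_finsetLT h, hFl, hGm, List.cons_append]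
  rw [ordsum_eq_lift a hFl, ordsum_eq_lift a hGm, ordsum_eq_lift a hFG, ← map_add]
  rfl

theorem ordsum_insert_of_lt (a : ℕ → S) {m : ℕ} {s : Finset ℕ} (hs : s.Nonempty)
    (h : ∀ x ∈ s, m < x) : ordsum a (insert m s) = a m + ordsum a s := by
  rw [Finset.insert_eq, ordsum_union a (Finset.singleton_nonempty m) hs
    (fun i hi x hx ↦ Finset.mem_singleton.1 hi ▸ h x hx), ordsum_singleton]

theorem map_ordsum {T : Type*} [AddSemigroup T] (f : S →ₙ+ T) (a : ℕ → S) {F : Finset ℕ}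
    (hF : F.Nonempty) : f (ordsum a F) = ordsum (f ∘ a) F := by
  obtain ⟨i, l, hFl⟩ := hF.exists_sort_eq_cons
  rw [ordsum_eq_lift a hFl, ordsum_eq_lift _ hFl, ← AddHom.comp_apply,
    ← FreeAddSemigroup.lift_comp_of' (f.comp _)]
  rfl

theorem ordsum_congr {a b : ℕ → S} {F : Finset ℕ} (hF : F.Nonempty)
    (h : ∀ i ∈ F, a i = b i) : ordsum a F = ordsum b F := by
  obtain ⟨i, l, hFl⟩ := hF.exists_sort_eq_cons
  have hmem : ∀ j ∈ i :: l, j ∈ F := fun j hj ↦ (F.mem_sort _).1 (hFl ▸ hj)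
  rw [ordsum_eq_lift a hFl, ordsum_eq_lift b hFl, FreeAddSemigroup.lift_mk_eq_foldl,
    FreeAddSemigroup.lift_mk_eq_foldl, h i (hmem i (List.mem_cons_self ..))]
  exact List.foldl_ext _ _ _ fun x j hj ↦ by rw [h j (hmem j (List.mem_cons_of_mem _ hj))]

theorem ordsum_map_addRight (a : ℕ → S) (N : ℕ) {K : Finset ℕ} (hK : K.Nonempty) :
    ordsum a (K.map (addRightEmbedding N)) = ordsum (fun k ↦ a (k + N)) K := by
  obtain ⟨i, l, hKl⟩ := hK.exists_sort_eq_cons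
  have hmap : (K.map (addRightEmbedding N)).sort (· ≤ ·) = (i + N) :: l.map (· + N) := by
    rw [← Finset.map_sort _ _ _ _ fun _ _ _ _ ↦ (Nat.add_le_add_iff_right).symm, hKl]
    rfl
  rw [ordsum_eq_lift a hmap, ordsum_eq_lift _ hKl, FreeAddSemigroup.lift_mk_eq_foldl,
    FreeAddSemigroup.lift_mk_eq_foldl, List.foldl_map]

theorem ordsum_biUnion (a : ℕ → S) {F : ℕ → Finset ℕ} {H : Finset ℕ} (hH : H.Nonempty)
    (hF : ∀ k ∈ H, (F k).Nonempty)
    (hlt : ∀ k ∈ H, ∀ l ∈ H, k < l → FinsetLT (F k) (F l)) :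
    ordsum (fun k ↦ ordsum a (F k)) H = ordsum a (H.biUnion F) := by
  classical
  induction H using Finset.induction_on_max with
  | empty => exact absurd hH Finset.not_nonempty_empty
  | insert m s hm ih =>
    rcases s.eq_empty_or_nonempty with rfl | hs
    · rw [insert_empty_eq, ordsum_singleton, Finset.singleton_biUnion]
    have hsub : s ⊆ insert m s := Finset.subset_insert m s
    have hmem : m ∈ insert m s := Finset.mem_insert_self m s
    have hsm : FinsetLT (s.biUnion F) (F m) := fun i hi j hj ↦ by
      obtain ⟨k, hk, hik⟩ := Finset.mem_biUnion.1 hi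
      exact hlt k (hsub hk) m hmem (hm k hk) i hik j hj
    rw [Finset.insert_eq, Finset.union_comm, ordsum_union _ hs (Finset.singleton_nonempty m)
      (fun k hk l hl ↦ Finset.mem_singleton.1 hl ▸ hm k hk), ordsum_singleton,
      ih hs (fun k hk ↦ hF k (hsub hk)) (fun k hk l hl ↦ hlt k (hsub hk) l (hsub hl)),
      Finset.union_biUnion, Finset.singleton_biUnion,
      ordsum_union a (hs.biUnion fun k hk ↦ hF k (hsub hk)) (hF m hmem) hsm]

theorem FS_drop_subset_of_le (q : Stream' S) {i j : ℕ} (hij : i ≤ j) :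
    FS (q.drop j) ⊆ FS (q.drop i) := by
  obtain ⟨d, rfl⟩ := Nat.exists_eq_add_of_le hij
  rw [← Stream'.drop_drop]
  exact FS_iter_tail_sub_FS _ d

theorem ordsum_mem_FS_drop (q : Stream' S) {K : Finset ℕ} (hK : K.Nonempty) {j : ℕ}
    (hj : ∀ i ∈ K, j ≤ i) : ordsum q.get K ∈ FS (q.drop j) := by
  classical
  induction K using Finset.induction_on_min generalizing j with
  | empty => exact absurd hK Finset.not_nonempty_empty
  | insert m s hm ih =>
    refine FS_drop_subset_of_le q (hj m (Finset.mem_insert_self m s)) ?_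
    rcases s.eq_empty_or_nonempty with rfl | hs
    · rw [insert_empty_eq, ordsum_singleton, ← Stream'.head_drop]
      exact FS.head _
    · rw [ordsum_insert_of_lt _ hs hm, ← Stream'.head_drop]
      refine FS.cons _ _ ?_
      rw [Stream'.tail_eq_drop, Stream'.drop_drop]
      exact ih hs hm

theorem mem_FS_iff (q : ℕ → S) {x : S} :
    x ∈ FS q ↔ ∃ K : Finset ℕ, K.Nonempty ∧ ordsum q K = x := by
  change x ∈ FS q ↔ x ∈ FSset (Stream'.get q)
  constructor
  · intro hx
    induction hx with
    | head' q => exact ⟨{0}, Finset.singleton_nonempty 0, ordsum_singleton _ 0⟩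
    | tail' q m _ ih =>
      obtain ⟨K, hK, rfl⟩ := ih
      exact ⟨K.map (addRightEmbedding 1), hK.map, ordsum_map_addRight _ 1 hK⟩
    | cons' q m _ ih =>
      obtain ⟨K, hK, rfl⟩ := ih
      refine ⟨insert 0 (K.map (addRightEmbedding 1)), Finset.insert_nonempty _ _, ?_⟩
      rw [ordsum_insert_of_lt _ hK.map (by simp), ordsum_map_addRight _ 1 hK]
      rfl
  · rintro ⟨K, hK, rfl⟩
    exact ordsum_mem_FS_drop q hK (j := 0) fun i _ ↦ i.zero_le

structure IsBlockSeq (F : ℕ → Finset ℕ) : Prop where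
  nonempty : ∀ k, (F k).Nonempty
  lt_succ : ∀ k, FinsetLT (F k) (F (k + 1))

namespace IsBlockSeq

variable {F : ℕ → Finset ℕ}

theorem lt (hF : IsBlockSeq F) {k l : ℕ} (hkl : k < l) : FinsetLT (F k) (F l) := by
  induction hkl with
  | refl => exact hF.lt_succ k
  | step _ ih => exact ih.trans (hF.nonempty _) (hF.lt_succ _)

theorem finsetLT_biUnion (hF : IsBlockSeq F) {H H' : Finset ℕ} (h : FinsetLT H H') :
    FinsetLT (H.biUnion F) (H'.biUnion F) := by
  intro i hi j hj
  obtain ⟨k, hk, hik⟩ := Finset.mem_biUnion.1 hi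
  obtain ⟨l, hl, hjl⟩ := Finset.mem_biUnion.1 hj
  exact hF.lt (h k hk l hl) i hik j hjl

theorem comp (hF : IsBlockSeq F) {E : ℕ → Finset ℕ} (hE : IsBlockSeq E) :
    IsBlockSeq fun k ↦ (E k).biUnion F where
  nonempty k := (hE.nonempty k).biUnion fun i _ ↦ hF.nonempty i
  lt_succ k := hF.finsetLT_biUnion (hE.lt_succ k)

theorem ordsum_biUnion (a : ℕ → S) (hF : IsBlockSeq F) {H : Finset ℕ} (hH : H.Nonempty) :
    ordsum (fun k ↦ ordsum a (F k)) H = ordsum a (H.biUnion F) :=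
  _root_.ordsum_biUnion a hH (fun k _ ↦ hF.nonempty k) fun _ _ _ _ ↦ hF.lt

end IsBlockSeq

namespace IsSumseq

variable {a b c : ℕ → S}

theorem iff_isBlockSeq : IsSumseq a b ↔ ∃ F, IsBlockSeq F ∧ ∀ k, b k = ordsum a (F k) :=
  ⟨fun ⟨F, hne, hlt, hb⟩ ↦ ⟨F, ⟨hne, hlt⟩, hb⟩,
    fun ⟨F, ⟨hne, hlt⟩, hb⟩ ↦ ⟨F, hne, hlt, hb⟩⟩

theorem refl (a : ℕ → S) : IsSumseq a a :=
  ⟨fun k ↦ {k}, fun k ↦ Finset.singleton_nonempty k,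
    fun k i hi j hj ↦ by simp only [Finset.mem_singleton] at hi hj; omega,
    fun k ↦ (ordsum_singleton a k).symm⟩

theorem tail (h : IsSumseq a b) : IsSumseq a fun k ↦ b (k + 1) :=
  let ⟨F, hne, hlt, hb⟩ := h
  ⟨fun k ↦ F (k + 1), fun k ↦ hne (k + 1), fun k ↦ hlt (k + 1), fun k ↦ hb (k + 1)⟩

theorem trans (hab : IsSumseq a b) (hbc : IsSumseq b c) : IsSumseq a c := by
  obtain ⟨F, hF, hb⟩ := iff_isBlockSeq.1 hab
  obtain ⟨E, hE, hc⟩ := iff_isBlockSeq.1 hbc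
  have hb' : b = fun k ↦ ordsum a (F k) := funext hb
  refine iff_isBlockSeq.2 ⟨_, hF.comp hE, fun k ↦ ?_⟩
  rw [hc, hb', hF.ordsum_biUnion a (hE.nonempty k)]

theorem mem_FS (h : IsSumseq a b) (k : ℕ) : b k ∈ FS a :=
  let ⟨F, hne, _, hb⟩ := h
  (mem_FS_iff a).2 ⟨F k, hne k, (hb k).symm⟩

theorem cons_of_shift {N : ℕ} {H : Finset ℕ} (hH : H.Nonempty) (hHN : ∀ i ∈ H, i < N)
    {d : ℕ → S} (hd : IsSumseq (fun k ↦ a (k + N)) d) :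
    IsSumseq a (Stream'.cons (ordsum a H) d) := by
  obtain ⟨D, hne, hlt, hD⟩ := hd
  refine ⟨Stream'.cons H fun k ↦ (D k).map (addRightEmbedding N),
    fun k ↦ k.casesOn hH fun _ ↦ (hne _).map, fun k ↦ ?_, fun k ↦ ?_⟩
  · cases k with
    | zero =>
      intro i hi j hj
      obtain ⟨j, -, rfl⟩ := Finset.mem_map.1 hj
      exact (hHN i hi).trans_le (Nat.le_add_left N j)
    | succ k =>
      show FinsetLT ((D k).map _) ((D (k + 1)).map _)
      intro i hi j hj
      obtain ⟨i', hi', rfl⟩ := Finset.mem_map.1 hi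
      obtain ⟨j', hj', rfl⟩ := Finset.mem_map.1 hj
      exact Nat.add_lt_add_right (hlt k i' hi' j' hj') N
  · cases k with
    | zero => rfl
    | succ k => exact (hD k).trans (ordsum_map_addRight a N (hne k)).symm

theorem of_cons_chain {c : ℕ → ℕ → S} {z : ℕ → S}
    (h : ∀ n, IsSumseq (c n) (Stream'.cons (z n) (c (n + 1)))) : IsSumseq (c 0) z := by
  choose E hE hcE using fun n ↦ iff_isBlockSeq.1 (h n)
  let B : ℕ → ℕ → Finset ℕ := fun n ↦
    Nat.rec (E 0) (fun n Bn k ↦ (E (n + 1) k).biUnion fun j ↦ Bn (j + 1)) n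
  have hB : ∀ n, IsBlockSeq (B n) ∧
      ∀ k, Stream'.cons (z n) (c (n + 1)) k = ordsum (c 0) (B n k) := by
    intro n
    induction n with
    | zero => exact ⟨hE 0, hcE 0⟩
    | succ n ih =>
      have hBn : IsBlockSeq fun j ↦ B n (j + 1) :=
        ⟨fun j ↦ ih.1.nonempty _, fun j ↦ ih.1.lt_succ _⟩
      have hc : c (n + 1) = fun j ↦ ordsum (c 0) (B n (j + 1)) := funext fun j ↦ ih.2 (j + 1)
      refine ⟨hBn.comp (hE (n + 1)), fun k ↦ ?_⟩
      rw [hcE, hc, hBn.ordsum_biUnion _ ((hE (n + 1)).nonempty k)]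
  refine iff_isBlockSeq.2
    ⟨fun n ↦ B n 0, ⟨fun n ↦ (hB n).1.nonempty 0, fun n ↦ ?_⟩, fun n ↦ (hB n).2 0⟩
  intro i hi j hj
  obtain ⟨l, -, hjl⟩ := Finset.mem_biUnion.1 hj
  exact (hB n).1.lt l.succ_pos i hi j hjl

end IsSumseq

theorem ordsum_of_eq {K : Finset ℕ} {i : ℕ} {l : List ℕ} (h : K.sort (· ≤ ·) = i :: l) :
    ordsum FreeAddSemigroup.of K = ⟨i, l⟩ := by
  rw [ordsum_eq_lift _ h]
  exact DFunLike.congr_fun (FreeAddSemigroup.lift_comp_of' (AddHom.id _)) _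

theorem finsetLT_of_ordsum_of_add_eq {K L M : Finset ℕ} (hK : K.Nonempty) (hL : L.Nonempty)
    (hM : M.Nonempty) (h : ordsum FreeAddSemigroup.of K + ordsum FreeAddSemigroup.of L =
      ordsum FreeAddSemigroup.of M) : FinsetLT K L := by
  obtain ⟨i, l, hKl⟩ := hK.exists_sort_eq_cons
  obtain ⟨j, m, hLm⟩ := hL.exists_sort_eq_cons
  obtain ⟨k, n, hMn⟩ := hM.exists_sort_eq_cons
  rw [ordsum_of_eq hKl, ordsum_of_eq hLm, ordsum_of_eq hMn] at h
  have hsort : M.sort (· ≤ ·) = K.sort (· ≤ ·) ++ L.sort (· ≤ ·) := by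
    injection h with hk hn
    rw [hMn, hKl, hLm, ← hk, ← hn, List.cons_append]
  have hpw := M.sortedLT_sort.pairwise
  rw [hsort, List.pairwise_append] at hpw
  exact fun x hx y hy ↦ hpw.2.2 x ((K.mem_sort _).2 hx) y ((L.mem_sort _).2 hy)

/-- Hindman's theorem is applied in the free semigroup on `ℕ`, whose finite sums
`of i₁ + ⋯ + of iₘ` remember their increasing index lists; this forces the sequence it produces
to come from increasing blocks of indices. -/
theorem exists_isSumseq_FS_subset {c : ℕ → S} {𝒞 : Set (Set S)} (h𝒞 : 𝒞.Finite)
    (hcov : FS c ⊆ ⋃₀ 𝒞) : ∃ C ∈ 𝒞, ∃ d, IsSumseq c d ∧ FS d ⊆ C := by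
  let φ := FreeAddSemigroup.lift c
  let p : Stream' (FreeAddSemigroup ℕ) := FreeAddSemigroup.of
  have hφ : ∀ K : Finset ℕ, K.Nonempty → φ (ordsum p K) = ordsum c K :=
    fun K hK ↦ map_ordsum φ p hK
  obtain ⟨-, ⟨C, hC, rfl⟩, q, hq⟩ := FS_partition_regular p
    ((fun C ↦ FS p ∩ φ ⁻¹' C) '' 𝒞) (h𝒞.image _) fun w hw ↦ by
      obtain ⟨K, hK, rfl⟩ := (mem_FS_iff p).1 hw
      obtain ⟨C, hC, hwC⟩ := hcov ((mem_FS_iff c).2 ⟨K, hK, (hφ K hK).symm⟩)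
      exact ⟨_, ⟨C, hC, rfl⟩, hw, hwC⟩
  choose K hK hKq using fun k ↦ (mem_FS_iff p).1 (hq (FS.singleton q k)).1
  refine ⟨C, hC, fun k ↦ φ (q.get k), ⟨K, hK, fun k ↦ ?_, fun k ↦ ?_⟩,
    fun y hy ↦ ?_⟩
  · obtain ⟨M, hM, hMq⟩ := (mem_FS_iff p).1 (hq (FS.add_two q k (k + 1) k.lt_succ_self)).1
    exact finsetLT_of_ordsum_of_add_eq (hK k) (hK (k + 1)) hM (by rw [hKq, hKq, hMq])
  · exact (congrArg φ (hKq k)).symm.trans (hφ _ (hK k))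
  · obtain ⟨H, hH, rfl⟩ := (mem_FS_iff _).1 hy
    have hqH := (hq ((mem_FS_iff q).2 ⟨H, hH, rfl⟩)).2
    rwa [Set.mem_preimage, map_ordsum φ q hH] at hqH

theorem exists_isSumseq_absorbed {c : ℕ → S} {X : Set S} (hX : X.Finite)
    (hc : ∀ y ∈ FS c, ∃ x ∈ X, x + y ∈ X) :
    ∃ z ∈ X, ∃ d, IsSumseq c d ∧ ∀ y ∈ FS d, z + y = z := by
  obtain ⟨-, ⟨⟨x, z⟩, ⟨-, hz⟩, rfl⟩, d, hd, hdC⟩ := exists_isSumseq_FS_subset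
    ((hX.prod hX).image fun p : S × S ↦ {y | p.1 + y = p.2}) fun y hy ↦ by
      obtain ⟨x, hx, hxy⟩ := hc y hy
      exact ⟨_, ⟨(x, x + y), ⟨hx, hxy⟩, rfl⟩, rfl⟩
  refine ⟨z, hz, fun k ↦ d (k + 1), hd.tail, fun y hy ↦ ?_⟩
  have h0 : x + d 0 = z := hdC (FS.head d)
  have h1 : x + (d 0 + y) = z := hdC (FS.cons d y hy)
  calc z + y = x + (d 0 + y) := by rw [← h0, add_assoc]
    _ = z := h1

theorem exists_seq_of_forall_exists_update {α : Type*} [Nonempty α]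
    (Q : (ℕ → α) → ℕ → Prop)
    (hQ : ∀ n f g, (∀ k ≤ n, f k = g k) → Q f n → Q g n)
    (h : ∀ n f, (∀ m < n, Q f m) → ∃ x, Q (Function.update f n x) n) :
    ∃ f, ∀ n, Q f n := by
  choose x hx using h
  let st : (n : ℕ) → {f // ∀ m < n, Q f m} := fun n ↦
    Nat.rec ⟨fun _ ↦ Classical.arbitrary α, fun _ h ↦ absurd h (Nat.not_lt_zero _)⟩
      (fun n s ↦ ⟨Function.update s.1 n (x n s.1 s.2), fun m hm ↦
        (Nat.lt_succ_iff_lt_or_eq.1 hm).elim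
          (fun hmn ↦ hQ m _ _ (fun k hk ↦ (Function.update_of_ne (by omega) _ _).symm)
            (s.2 m hmn))
          (fun hmn ↦ hmn ▸ hx n s.1 s.2)⟩) n
  have hst : ∀ n k, k < n → (st n).1 k = (st (k + 1)).1 k := by
    intro n k hk
    induction n with
    | zero => omega
    | succ n ih =>
      rcases Nat.lt_succ_iff_lt_or_eq.1 hk with hkn | rfl
      · exact (Function.update_of_ne hkn.ne _ _).trans (ih hkn)
      · rfl
  exact ⟨fun k ↦ (st (k + 1)).1 k, fun n ↦
    hQ n _ _ (fun k hk ↦ hst (n + 1) k (by omega)) ((st (n + 1)).2 n n.lt_succ_self)⟩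

def FSfinDisjointAt (b : ℕ → S) (n : ℕ) : Prop :=
  ∀ x ∈ FSfin b n, x + b n ∉ FSfin b n

/-- The blocks `F 0, …, F n` form a valid prefix of the greedy construction, inside `c`, of a
sumsequence satisfying (2). -/
def AdmissibleAt (c : ℕ → S) (F : ℕ → Finset ℕ) (n : ℕ) : Prop :=
  (F n).Nonempty ∧ (∀ k < n, FinsetLT (F k) (F n)) ∧
    FSfinDisjointAt (fun k ↦ ordsum c (F k)) n

theorem FSfin_congr {b b' : ℕ → S} {n : ℕ} (h : ∀ k < n, b k = b' k) :
    FSfin b n = FSfin b' n := by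
  ext x
  constructor <;> rintro ⟨F, hF, hFn, rfl⟩
  · exact ⟨F, hF, hFn, (ordsum_congr hF fun i hi ↦ h i (Finset.mem_range.1 (hFn hi))).symm⟩
  · exact ⟨F, hF, hFn, ordsum_congr hF fun i hi ↦ h i (Finset.mem_range.1 (hFn hi))⟩

theorem FSfin_finite (b : ℕ → S) (n : ℕ) : (FSfin b n).Finite :=
  ((Finset.range n).powerset.finite_toSet.image (ordsum b)).subset
    fun _ ⟨F, _, hFn, hx⟩ ↦ ⟨F, Finset.mem_powerset.2 hFn, hx⟩

theorem AdmissibleAt.congr {c : ℕ → S} {F G : ℕ → Finset ℕ} {n : ℕ}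
    (h : ∀ k ≤ n, F k = G k) (hF : AdmissibleAt c F n) : AdmissibleAt c G n := by
  obtain ⟨hne, hlt, hdisj⟩ := hF
  refine ⟨h n le_rfl ▸ hne, fun k hk ↦ h k hk.le ▸ h n le_rfl ▸ hlt k hk, ?_⟩
  rw [FSfinDisjointAt, ← FSfin_congr fun k hk ↦ congrArg (ordsum c) (h k hk.le), ← h n le_rfl]
  exact hdisj

theorem exists_isSumseq_cons_absorbing {c : ℕ → S}
    (hc : ∀ b, IsSumseq c b → ∃ n, ¬FSfinDisjointAt b (n + 1)) :
    ∃ z d, IsSumseq c (Stream'.cons z d) ∧ ∀ y ∈ FS d, z + y = z := by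
  obtain ⟨n, F, hF, hstuck⟩ : ∃ n F, (∀ m < n, AdmissibleAt c F m) ∧
      ∀ G, ¬AdmissibleAt c (Function.update F n G) n := by
    by_contra! h
    obtain ⟨F, hF⟩ := exists_seq_of_forall_exists_update (AdmissibleAt c)
      (fun _ _ _ ↦ AdmissibleAt.congr) h
    obtain ⟨n, hn⟩ := hc _
      ⟨F, fun k ↦ (hF k).1, fun k ↦ (hF (k + 1)).2.1 k k.lt_succ_self, fun _ ↦ rfl⟩
    exact hn (hF (n + 1)).2.2
  set b : ℕ → S := fun k ↦ ordsum c (F k)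
  obtain ⟨N, hN⟩ := ((Finset.range n).biUnion F).exists_nat_subset_range
  have hFN : ∀ k < n, ∀ i ∈ F k, i < N := fun k hk i hi ↦
    Finset.mem_range.1 (hN (Finset.mem_biUnion.2 ⟨k, Finset.mem_range.2 hk, hi⟩))
  have hcover : ∀ y ∈ FS fun k ↦ c (k + N), ∃ x ∈ FSfin b n, x + y ∈ FSfin b n := by
    intro y hy
    obtain ⟨K, hK, rfl⟩ := (mem_FS_iff _).1 hy
    -- otherwise the block of `y` would extend the stuck prefix
    by_contra! hdisj
    refine hstuck (K.map (addRightEmbedding N)) ⟨?_, fun k hk ↦ ?_, ?_⟩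
    · rw [Function.update_self]
      exact hK.map
    · rw [Function.update_self, Function.update_of_ne hk.ne]
      intro i hi j hj
      obtain ⟨j, -, rfl⟩ := Finset.mem_map.1 hj
      exact (hFN k hk i hi).trans_le (Nat.le_add_left N j)
    · rw [FSfinDisjointAt, FSfin_congr (b' := b) fun k hk ↦ by
        rw [Function.update_of_ne hk.ne], Function.update_self, ordsum_map_addRight c N hK]
      exact hdisj
  obtain ⟨z, ⟨I, hI, hIn, rfl⟩, d, hd, habs⟩ :=
    exists_isSumseq_absorbed (FSfin_finite b n) hcover
  have hIn' : ∀ k ∈ I, k < n := fun k hk ↦ Finset.mem_range.1 (hIn hk)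
  refine ⟨_, d, ?_, habs⟩
  rw [ordsum_biUnion c hI (fun k hk ↦ (hF k (hIn' k hk)).1)
    fun k _ l hl hkl ↦ (hF l (hIn' l hl)).2.1 k hkl]
  refine IsSumseq.cons_of_shift (hI.biUnion fun k hk ↦ (hF k (hIn' k hk)).1) (fun i hi ↦ ?_) hd
  obtain ⟨k, hk, hik⟩ := Finset.mem_biUnion.1 hi
  exact hFN k (hIn' k hk) i hik

end Sumsequences

theorem stmt8 {S : Type*} [AddSemigroup S] (a : ℕ → S) :
    ∃ b : ℕ → S, IsSumseq a b ∧
      ((∀ n m : ℕ, n < m → b n + b m = b n) ∨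
        (∀ n : ℕ, ∀ x ∈ FSfin b (n + 1), x + b (n + 1) ∉ FSfin b (n + 1))) := by
  by_cases h : ∃ b, IsSumseq a b ∧ ∀ n, FSfinDisjointAt b (n + 1)
  · obtain ⟨b, hb, hdisj⟩ := h
    exact ⟨b, hb, Or.inr hdisj⟩
  have hno : ∀ b, IsSumseq a b → ∃ n, ¬FSfinDisjointAt b (n + 1) :=
    fun b hb ↦ not_forall.1 fun hdisj ↦ h ⟨b, hb, hdisj⟩
  have step : ∀ c : {c // IsSumseq a c}, ∃ z d, IsSumseq c.1 (Stream'.cons z d) ∧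
      IsSumseq a d ∧ ∀ y ∈ FS d, z + y = z := fun ⟨c, hc⟩ ↦
    let ⟨z, d, hcons, habs⟩ := exists_isSumseq_cons_absorbing fun b hb ↦ hno b (hc.trans hb)
    ⟨z, d, hcons, hc.trans hcons.tail, habs⟩
  choose z d hcons hd habs using step
  let c : ℕ → {c // IsSumseq a c} := fun n ↦
    Nat.rec ⟨a, IsSumseq.refl a⟩ (fun _ c ↦ ⟨d c, hd c⟩) n
  have hchain : ∀ n, IsSumseq (c n).1 (Stream'.cons (z (c n)) (c (n + 1)).1) :=
    fun n ↦ hcons (c n)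
  refine ⟨fun n ↦ z (c n), IsSumseq.of_cons_chain hchain, Or.inl fun n m hnm ↦ ?_⟩
  obtain ⟨k, rfl⟩ := Nat.exists_eq_add_of_le hnm
  have hlater : IsSumseq (c (n + 1)).1 fun k ↦ z (c (n + 1 + k)) :=
    IsSumseq.of_cons_chain fun k ↦ hchain (n + 1 + k)
  exact habs (c n) _ (hlater.mem_FS k)
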